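/- arXiv:2212.07002 — 3 statements merged into one kernel-verified Lean document; each statement's English description precedes it below -/
import Mathlib

section
/- Let α_1 ≥ α_2 ≥ … ≥ α_n be positive integers with n > 2, let S = Σ_{i=1}^n α_i with S > 2, let β be an integer with 0 < β < S, and let k < n be a positive integer. Consider the EAS instance with T = n + k + 4 time slots and n + 1 jobs, where for i ∈ {1,…,n}, job i has r_i = 2, d_i = k + 2 + i, and e_i = S²n² + α_i·(Sn), and job n+1 has r_{n+1} = 2, d_{n+1} = n + k + 4, and e_{n+1} = S³n³; and where h_1 = k·(S²n²) + β·(Sn); h_t = 0 for t ∈ {2,…,k+1}; h_{k+2} = (n−k)·(S²n²) + (S−β)·(Sn); h_t = S + α_{t−k−2} for t ∈ {k+3,…,n+k+2}; h_{n+k+3} = S³n³ − S·k − β; and h_{n+k+4} = 0. Then there exists a feasible schedule scheduling all n + 1 jobs if and only if there exists a set I ⊆ {1,…,n} with |I| = k and Σ_{i ∈ I} α_i = β. -/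
/-!
Write `P = S n`. A small job costs `P² + α_i P`, slot `1` harvests `k P² + β P`, slot `k + 2`
harvests the remaining `(n - k) P² + (S - β) P` of the small jobs' total demand, slot `k + 2 + i`
harvests `S + α_i`, and slot `n + k + 3` harvests `P³ - S k - β`.

The big job needs more than everything harvested before slot `n + k + 3`, so it runs last, and
then the small jobs may waste at most `(n + 1 - k) S - β` of harvest by running on harvesting
slots. Slot `k + 2` is therefore never used, and every job `j` not run in the idle slots
`2, …, k + 1` wastes at least `S + α_j`, since it runs by its due date `k + 2 + j` and `α` is
antitone. For the set `I` of jobs run in idle slots this gives `|I| ≤ k` and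
`(k - |I|) S + β ≤ ∑_{i ∈ I} α_i`, while these jobs are all paid from slot `1`, so
`|I| P² + (∑_{i ∈ I} α_i) P ≤ k P² + β P`. Together, `|I| = k` and `∑_{i ∈ I} α_i = β`.

Conversely, for such an `I` run its jobs in the idle slots, every other job `i` at its due date,
and the big job last: slot `1` pays exactly for `I`, slot `k + 2` exactly for the other small
jobs, and the big job receives exactly `P³`.
-/

/-- The energy available immediately before slot `t`:
the total energy harvestable at slots `1,…,t-1`, minus, for each job `i ∈ J`
scheduled at a slot `σ i < t`, its energy requirement `e i` plus the harvestable
energy `h (σ i)` lost at its execution slot. -/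
def energyBefore (e h : ℕ → ℤ) (J : Finset ℕ) (σ : ℕ → ℕ) (t : ℕ) : ℤ :=
  (∑ τ ∈ Finset.Icc 1 (t - 1), h τ) -
    ∑ i ∈ J.filter (fun i => σ i < t), (e i + h (σ i))

/-- A schedule `(J, σ)` is feasible for an EAS instance with `n` jobs, `T` slots,
release times `r`, due dates `d`, energy requirements `e` and harvest profile `h`. -/
def IsFeasible (n T : ℕ) (r d : ℕ → ℕ) (e h : ℕ → ℤ)
    (J : Finset ℕ) (σ : ℕ → ℕ) : Prop :=
  J ⊆ Finset.Icc 1 n ∧ Set.InjOn σ ↑J ∧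
    ∀ i ∈ J, 1 ≤ σ i ∧ σ i ≤ T ∧ r i ≤ σ i ∧ σ i ≤ d i ∧
      e i ≤ energyBefore e h J σ (σ i)

open Finset

theorem le_energyBefore_of_filter_subset {e h : ℕ → ℤ} {J A : Finset ℕ} {σ : ℕ → ℕ} {t : ℕ}
    (hA : J.filter (fun i => σ i < t) ⊆ A) (hnonneg : ∀ j ∈ A, 0 ≤ e j + h (σ j)) :
    ∑ τ ∈ Icc 1 (t - 1), h τ - ∑ j ∈ A, (e j + h (σ j)) ≤ energyBefore e h J σ t := by
  have := sum_le_sum_of_subset_of_nonneg hA fun j hj _ => hnonneg j hj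
  unfold energyBefore
  linarith

theorem IsFeasible.add_sum_le_sum_harvest {N T : ℕ} {r d : ℕ → ℕ} {e h : ℕ → ℤ}
    {J A : Finset ℕ} {σ : ℕ → ℕ} {i : ℕ} (hf : IsFeasible N T r d e h J σ) (hi : i ∈ J)
    (hA : A ⊆ J) (hlt : ∀ j ∈ A, σ j < σ i)
    (hnonneg : ∀ j ∈ J, σ j < σ i → 0 ≤ e j + h (σ j)) :
    e i + ∑ j ∈ A, (e j + h (σ j)) ≤ ∑ τ ∈ Icc 1 (σ i - 1), h τ := by
  have hsub : A ⊆ J.filter (fun j => σ j < σ i) := fun j hj =>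
    mem_filter.mpr ⟨hA hj, hlt j hj⟩
  have := sum_le_sum_of_subset_of_nonneg hsub fun j hj _ =>
    hnonneg j (mem_filter.mp hj).1 (mem_filter.mp hj).2
  have := (hf.2.2 i hi).2.2.2.2
  unfold energyBefore at this
  linarith

theorem sum_add_const_eq {S : ℤ} (α : ℕ → ℤ) (I : Finset ℕ) :
    ∑ i ∈ I, (S + α i) = I.card * S + ∑ i ∈ I, α i := by
  rw [sum_add_distrib, sum_const, nsmul_eq_mul]

theorem add_one_mul_lt_sq_mul_sq {n S : ℤ} (hn : 3 ≤ n) (hS : n ≤ S) :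
    (n + 1) * S < S ^ 2 * n ^ 2 := by
  have hSn : n + 1 < S * n ^ 2 := by nlinarith
  have := mul_lt_mul_of_pos_left hSn (by linarith : 0 < S)
  nlinarith

theorem mul_add_add_lt_cube_mul_cube {n S : ℤ} (hn : 3 ≤ n) (hS : n ≤ S) :
    n * (S ^ 2 * n ^ 2) + S * (S * n) + (n + 1) * S < S ^ 3 * n ^ 3 := by
  have hsq := add_one_mul_lt_sq_mul_sq hn hS
  have hP : n + 2 ≤ S * n := by nlinarith
  have hSP : S * (S * n) ≤ S ^ 2 * n ^ 2 := by nlinarith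
  have : (n + 2) * (S ^ 2 * n ^ 2) ≤ S ^ 3 * n ^ 3 := by
    have := mul_le_mul_of_nonneg_right hP (by positivity : (0 : ℤ) ≤ S ^ 2 * n ^ 2)
    nlinarith
  nlinarith

theorem eq_and_eq_of_bounds {m k a β S P : ℤ} (hm : m ≤ k) (hS : 0 ≤ S) (ha : a ≤ S)
    (hP : 0 < P) (hβ : 0 < β) (hlow : (k - m) * S + β ≤ a)
    (hup : m * P ^ 2 + a * P ≤ k * P ^ 2 + β * P) : m = k ∧ a = β := by
  have hmk : m = k := by
    by_contra hne
    nlinarith [mul_le_mul_of_nonneg_right (by omega : (1 : ℤ) ≤ k - m) hS]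
  subst hmk
  exact ⟨rfl, le_antisymm (le_of_mul_le_mul_right (by linarith) hP) (by linarith)⟩

theorem strictMonoOn_card_filter_le (I : Finset ℕ) :
    StrictMonoOn (fun i => (I.filter (· ≤ i)).card) I := by
  intro i _ j hj hij
  refine card_lt_card ⟨fun x hx => ?_, fun hsub => ?_⟩
  · exact mem_filter.mpr ⟨(mem_filter.mp hx).1, (mem_filter.mp hx).2.trans hij.le⟩
  · have := (mem_filter.mp (hsub (mem_filter.mpr ⟨hj, le_rfl⟩))).2
    exact absurd hij (not_lt.mpr this)

def kSumSchedule (n k : ℕ) (I : Finset ℕ) (i : ℕ) : ℕ :=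
  if i = n + 1 then n + k + 4 else if i ∈ I then (I.filter (· ≤ i)).card + 1 else k + 2 + i

section kSumSchedule

variable {n k : ℕ} {I : Finset ℕ} {i : ℕ}

theorem mem_or_mem_sdiff_or_eq_last (I : Finset ℕ) (hi : i ∈ Icc 1 (n + 1)) :
    i ∈ I ∨ i ∈ Icc 1 n \ I ∨ i = n + 1 := by
  by_cases hiI : i ∈ I
  · exact Or.inl hiI
  rcases eq_or_ne i (n + 1) with rfl | hne
  · exact Or.inr (Or.inr rfl)
  exact Or.inr (Or.inl (mem_sdiff.mpr
    ⟨mem_Icc.mpr ⟨(mem_Icc.mp hi).1, by have := (mem_Icc.mp hi).2; omega⟩, hiI⟩))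

theorem kSumSchedule_last : kSumSchedule n k I (n + 1) = n + k + 4 := by
  simp [kSumSchedule]

theorem kSumSchedule_of_mem_sdiff (hi : i ∈ Icc 1 n \ I) :
    kSumSchedule n k I i = k + 2 + i := by
  obtain ⟨hi, hiI⟩ := mem_sdiff.mp hi
  have : i ≠ n + 1 := by have := (mem_Icc.mp hi).2; omega
  simp [kSumSchedule, this, hiI]

theorem kSumSchedule_of_mem (hI : I ⊆ Icc 1 n) (hi : i ∈ I) :
    kSumSchedule n k I i = (I.filter (· ≤ i)).card + 1 := by
  have : i ≠ n + 1 := by have := (mem_Icc.mp (hI hi)).2; omega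
  simp [kSumSchedule, this, hi]

theorem kSumSchedule_bounds_of_mem (hI : I ⊆ Icc 1 n) (hcard : I.card = k) (hi : i ∈ I) :
    2 ≤ kSumSchedule n k I i ∧ kSumSchedule n k I i ≤ k + 1 := by
  have hpos : 0 < (I.filter (· ≤ i)).card := card_pos.mpr ⟨i, mem_filter.mpr ⟨hi, le_rfl⟩⟩
  have hle : (I.filter (· ≤ i)).card ≤ k := hcard ▸ card_le_card (filter_subset _ _)
  rw [kSumSchedule_of_mem hI hi]
  omega

theorem kSumSchedule_cases (hI : I ⊆ Icc 1 n) (hcard : I.card = k)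
    (hi : i ∈ Icc 1 (n + 1)) :
    (i ∈ I ∧ 2 ≤ kSumSchedule n k I i ∧ kSumSchedule n k I i ≤ k + 1) ∨
      (i ∈ Icc 1 n \ I ∧ kSumSchedule n k I i = k + 2 + i) ∨
      (i = n + 1 ∧ kSumSchedule n k I i = n + k + 4) := by
  rcases mem_or_mem_sdiff_or_eq_last I hi with hiI | hiC | rfl
  · exact Or.inl ⟨hiI, kSumSchedule_bounds_of_mem hI hcard hiI⟩
  · exact Or.inr (Or.inl ⟨hiC, kSumSchedule_of_mem_sdiff hiC⟩)
  · exact Or.inr (Or.inr ⟨rfl, kSumSchedule_last⟩)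

theorem injOn_kSumSchedule (hI : I ⊆ Icc 1 n) (hcard : I.card = k) :
    Set.InjOn (kSumSchedule n k I) (Icc 1 (n + 1) : Finset ℕ) := by
  intro i hi j hj hij
  have hin := (mem_Icc.mp hi).2
  have hjn := (mem_Icc.mp hj).2
  rcases kSumSchedule_cases hI hcard hi with ⟨hiI, hσi⟩ | ⟨-, hσi⟩ | ⟨rfl, hσi⟩ <;>
  rcases kSumSchedule_cases hI hcard hj with ⟨hjI, hσj⟩ | ⟨-, hσj⟩ | ⟨rfl, hσj⟩
  · refine (strictMonoOn_card_filter_le I).injOn hiI hjI ?_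
    simpa [kSumSchedule_of_mem hI hiI, kSumSchedule_of_mem hI hjI] using hij
  all_goals omega

end kSumSchedule

def earlyJobs (n k : ℕ) (σ : ℕ → ℕ) : Finset ℕ := (Icc 1 n).filter (fun j => σ j ≤ k + 1)

structure KSumReduction (n k : ℕ) (α : ℕ → ℤ) (S β : ℤ) (r d : ℕ → ℕ)
    (e h : ℕ → ℤ) : Prop where
  two_lt_n : 2 < n
  alpha_pos : ∀ i ∈ Icc 1 n, 0 < α i
  alpha_antitone : ∀ i j, 1 ≤ i → i ≤ j → j ≤ n → α j ≤ α i
  S_eq_sum : S = ∑ i ∈ Icc 1 n, α i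
  beta_pos : 0 < β
  beta_lt_S : β < S
  k_lt_n : k < n
  release : ∀ i, r i = 2
  due : ∀ i, 1 ≤ i → i ≤ n → d i = k + 2 + i
  due_last : d (n + 1) = n + k + 4
  energy : ∀ i, 1 ≤ i → i ≤ n → e i = S ^ 2 * n ^ 2 + α i * (S * n)
  energy_last : e (n + 1) = S ^ 3 * n ^ 3
  harvest_one : h 1 = k * (S ^ 2 * n ^ 2) + β * (S * n)
  harvest_idle : ∀ t, 2 ≤ t → t ≤ k + 1 → h t = 0
  harvest_buffer : h (k + 2) = (n - k) * (S ^ 2 * n ^ 2) + (S - β) * (S * n)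
  harvest_item : ∀ t, k + 3 ≤ t → t ≤ n + k + 2 → h t = S + α (t - k - 2)
  harvest_last : h (n + k + 3) = S ^ 3 * n ^ 3 - S * k - β

namespace KSumReduction

variable {n k : ℕ} {α : ℕ → ℤ} {S β : ℤ} {r d : ℕ → ℕ} {e h : ℕ → ℤ} {σ : ℕ → ℕ}
  {I : Finset ℕ} {i : ℕ}

theorem sum_alpha_le (H : KSumReduction n k α S β r d e h) (hI : I ⊆ Icc 1 n) :
    ∑ i ∈ I, α i ≤ S :=
  H.S_eq_sum ▸ sum_le_sum_of_subset_of_nonneg hI fun i hi _ => (H.alpha_pos i hi).le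

theorem n_le_S (H : KSumReduction n k α S β r d e h) : (n : ℤ) ≤ S := by
  have := card_nsmul_le_sum (Icc 1 n) α 1 fun i hi => H.alpha_pos i hi
  simpa [H.S_eq_sum] using this

theorem S_pos (H : KSumReduction n k α S β r d e h) : 0 < S := by
  have := H.n_le_S
  have : (2 : ℤ) < n := by exact_mod_cast H.two_lt_n
  linarith

theorem Sn_pos (H : KSumReduction n k α S β r d e h) : 0 < S * n :=
  mul_pos H.S_pos (by exact_mod_cast (by have := H.two_lt_n; omega : 0 < n))

theorem sum_add_alpha_Icc (H : KSumReduction n k α S β r d e h) :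
    ∑ i ∈ Icc 1 n, (S + α i) = n * S + S := by
  simp [sum_add_const_eq, ← H.S_eq_sum]

theorem sum_add_alpha_le_of_subset (H : KSumReduction n k α S β r d e h) {A : Finset ℕ}
    {m : ℕ} (hm : m ≤ n) (hA : A ⊆ Icc 1 m) :
    ∑ j ∈ A, (S + α j) ≤ ∑ j ∈ Icc 1 m, (S + α j) :=
  sum_le_sum_of_subset_of_nonneg hA fun j hj _ => by
    linarith [H.alpha_pos j (Icc_subset_Icc_right hm hj), H.S_pos]

theorem sum_energy (H : KSumReduction n k α S β r d e h) (hI : I ⊆ Icc 1 n) :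
    ∑ i ∈ I, e i = I.card * (S ^ 2 * n ^ 2) + (∑ i ∈ I, α i) * (S * n) := by
  rw [sum_congr rfl fun i hi => H.energy i (mem_Icc.mp (hI hi)).1 (mem_Icc.mp (hI hi)).2,
    sum_add_distrib, sum_const, sum_mul, nsmul_eq_mul]

theorem harvest_one_add_buffer (H : KSumReduction n k α S β r d e h) :
    h 1 + h (k + 2) = n * (S ^ 2 * n ^ 2) + S * (S * n) := by
  rw [H.harvest_one, H.harvest_buffer]
  ring

theorem sum_energy_Icc (H : KSumReduction n k α S β r d e h) :
    ∑ i ∈ Icc 1 n, e i = h 1 + h (k + 2) := by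
  rw [H.sum_energy subset_rfl, ← H.S_eq_sum, H.harvest_one_add_buffer, Nat.card_Icc,
    add_tsub_cancel_right]

theorem energy_nonneg (H : KSumReduction n k α S β r d e h) (hi : i ∈ Icc 1 n) :
    0 ≤ e i := by
  rw [H.energy i (mem_Icc.mp hi).1 (mem_Icc.mp hi).2]
  have := mul_pos (H.alpha_pos i hi) H.Sn_pos
  positivity

theorem harvest_nonneg (H : KSumReduction n k α S β r d e h) {t : ℕ} (h1 : 1 ≤ t)
    (ht : t ≤ n + k + 2) : 0 ≤ h t := by
  have := H.beta_pos
  have := H.beta_lt_S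
  have : (k : ℤ) < n := by exact_mod_cast H.k_lt_n
  rcases Nat.lt_or_ge t 2 with ht2 | ht2
  · obtain rfl : t = 1 := by omega
    rw [H.harvest_one]
    have := mul_pos H.beta_pos H.Sn_pos
    positivity
  rcases Nat.lt_or_ge t (k + 2) with htk | htk
  · rw [H.harvest_idle t ht2 (by omega)]
  rcases Nat.lt_or_ge t (k + 3) with htk' | htk'
  · obtain rfl : t = k + 2 := by omega
    rw [H.harvest_buffer]
    have := mul_nonneg (by linarith : (0 : ℤ) ≤ n - k) (sq_nonneg (S * n))
    have := mul_pos (by linarith : (0 : ℤ) < S - β) H.Sn_pos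
    nlinarith
  · rw [H.harvest_item t htk' ht]
    have := H.alpha_pos (t - k - 2) (mem_Icc.mpr ⟨by omega, by omega⟩)
    linarith

theorem sum_harvest_Icc_of_le (H : KSumReduction n k α S β r d e h) {t : ℕ} (h1 : 1 ≤ t)
    (ht : t ≤ k + 1) : ∑ τ ∈ Icc 1 t, h τ = h 1 := by
  induction t, h1 using Nat.le_induction with
  | base => simp
  | succ t ht1 ih =>
    rw [sum_Icc_succ_top (by omega), ih (by omega), H.harvest_idle (t + 1) (by omega) ht,
      add_zero]

theorem sum_harvest_Icc_add (H : KSumReduction n k α S β r d e h) {m : ℕ} (hm : m ≤ n) :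
    ∑ τ ∈ Icc 1 (k + 2 + m), h τ = h 1 + h (k + 2) + ∑ i ∈ Icc 1 m, (S + α i) := by
  induction m with
  | zero => simp [sum_Icc_succ_top, H.sum_harvest_Icc_of_le]
  | succ m ih =>
    rw [← add_assoc, sum_Icc_succ_top (by omega), ih (by omega), sum_Icc_succ_top (by omega),
      H.harvest_item (k + 2 + m + 1) (by omega) (by omega),
      show k + 2 + m + 1 - k - 2 = m + 1 by omega]
    ring

theorem slot_mem_of_feasible (H : KSumReduction n k α S β r d e h)
    (hf : IsFeasible (n + 1) (n + k + 4) r d e h (Icc 1 (n + 1)) σ) {j : ℕ}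
    (hj : j ∈ Icc 1 n) :
    2 ≤ σ j ∧ σ j ≤ k + 2 + j := by
  obtain ⟨hj1, hjn⟩ := mem_Icc.mp hj
  obtain ⟨-, -, hr, hd, -⟩ := hf.2.2 j (mem_Icc.mpr ⟨hj1, by omega⟩)
  rw [H.release] at hr
  rw [H.due j hj1 hjn] at hd
  exact ⟨hr, hd⟩

theorem harvest_slot_nonneg (H : KSumReduction n k α S β r d e h)
    (hf : IsFeasible (n + 1) (n + k + 4) r d e h (Icc 1 (n + 1)) σ) {j : ℕ}
    (hj : j ∈ Icc 1 n) :
    0 ≤ h (σ j) := by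
  have := H.slot_mem_of_feasible hf hj
  exact H.harvest_nonneg (by omega) (by have := (mem_Icc.mp hj).2; omega)

theorem consumption_nonneg_before (H : KSumReduction n k α S β r d e h)
    (hf : IsFeasible (n + 1) (n + k + 4) r d e h (Icc 1 (n + 1)) σ) {i : ℕ}
    (hi : σ i ≤ σ (n + 1)) : ∀ j ∈ Icc 1 (n + 1), σ j < σ i → 0 ≤ e j + h (σ j) := by
  intro j hj hlt
  have hj' : j ∈ Icc 1 n := by
    have : j ≠ n + 1 := by rintro rfl; omega
    exact mem_Icc.mpr ⟨(mem_Icc.mp hj).1, by have := (mem_Icc.mp hj).2; omega⟩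
  exact add_nonneg (H.energy_nonneg hj') (H.harvest_slot_nonneg hf hj')

theorem slot_last_of_feasible (H : KSumReduction n k α S β r d e h)
    (hf : IsFeasible (n + 1) (n + k + 4) r d e h (Icc 1 (n + 1)) σ) :
    σ (n + 1) = n + k + 4 := by
  have hmem : n + 1 ∈ Icc 1 (n + 1) := mem_Icc.mpr ⟨by omega, le_rfl⟩
  have hT := (hf.2.2 (n + 1) hmem).2.1
  by_contra hne
  have hcover := hf.add_sum_le_sum_harvest hmem (empty_subset _) (by simp)
    (H.consumption_nonneg_before hf le_rfl)
  have hmono : ∑ τ ∈ Icc 1 (σ (n + 1) - 1), h τ ≤ ∑ τ ∈ Icc 1 (k + 2 + n), h τ :=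
    sum_le_sum_of_subset_of_nonneg (Icc_subset_Icc_right (by omega)) fun τ hτ _ =>
      H.harvest_nonneg (mem_Icc.mp hτ).1 (by have := (mem_Icc.mp hτ).2; omega)
  rw [H.sum_harvest_Icc_add le_rfl, H.sum_add_alpha_Icc, H.harvest_one_add_buffer] at hmono
  rw [sum_empty, add_zero, H.energy_last] at hcover
  have := mul_add_add_lt_cube_mul_cube (by exact_mod_cast H.two_lt_n) H.n_le_S
  linarith

theorem sum_harvest_slot_le (H : KSumReduction n k α S β r d e h)
    (hf : IsFeasible (n + 1) (n + k + 4) r d e h (Icc 1 (n + 1)) σ) :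
    ∑ j ∈ Icc 1 n, h (σ j) ≤ (n + 1 - k) * S - β := by
  have hlast := H.slot_last_of_feasible hf
  have hcover := hf.add_sum_le_sum_harvest (mem_Icc.mpr ⟨by omega, le_rfl⟩)
    (Icc_subset_Icc_right (Nat.le_succ n))
    (fun j hj => by have := H.slot_mem_of_feasible hf hj; have := (mem_Icc.mp hj).2; omega)
    (H.consumption_nonneg_before hf le_rfl)
  rw [hlast, show n + k + 4 - 1 = k + 2 + n + 1 by omega, sum_Icc_succ_top (by omega),
    H.sum_harvest_Icc_add le_rfl, sum_add_distrib, H.sum_energy_Icc, H.sum_add_alpha_Icc,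
    show k + 2 + n + 1 = n + k + 3 by omega, H.energy_last, H.harvest_last] at hcover
  linarith

theorem add_alpha_le_harvest_slot (H : KSumReduction n k α S β r d e h)
    (hf : IsFeasible (n + 1) (n + k + 4) r d e h (Icc 1 (n + 1)) σ) {j : ℕ}
    (hj : j ∈ Icc 1 n) (hlate : k + 1 < σ j) : S + α j ≤ h (σ j) := by
  obtain ⟨hj1, hjn⟩ := mem_Icc.mp hj
  have hslot := H.slot_mem_of_feasible hf hj
  -- slot `k + 2` alone harvests more than the job slots may harvest in total
  have hbuffer : σ j ≠ k + 2 := by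
    intro hσj
    have hle := (single_le_sum (fun i hi => H.harvest_slot_nonneg hf hi) hj).trans
      (H.sum_harvest_slot_le hf)
    rw [hσj, H.harvest_buffer] at hle
    have := add_one_mul_lt_sq_mul_sq (by exact_mod_cast H.two_lt_n) H.n_le_S
    have := mul_pos (sub_pos.mpr H.beta_lt_S) H.Sn_pos
    have := mul_nonneg (by have := H.k_lt_n; omega : (0 : ℤ) ≤ n - k - 1)
      (by positivity : (0 : ℤ) ≤ S ^ 2 * n ^ 2)
    have := mul_nonneg (Nat.cast_nonneg k) H.S_pos.le
    linarith [H.beta_pos]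
  rw [H.harvest_item (σ j) (by omega) (by omega)]
  have := H.alpha_antitone (σ j - k - 2) j (by omega) (by omega) hjn
  linarith

theorem card_earlyJobs_le (H : KSumReduction n k α S β r d e h)
    (hf : IsFeasible (n + 1) (n + k + 4) r d e h (Icc 1 (n + 1)) σ) :
    (earlyJobs n k σ).card ≤ k := by
  have hsub : earlyJobs n k σ ⊆ Icc 1 (n + 1) :=
    (filter_subset _ _).trans (Icc_subset_Icc_right (Nat.le_succ n))
  have := card_le_card_of_injOn σ (t := Icc 2 (k + 1))
    (fun j hj => mem_Icc.mpr ⟨(H.slot_mem_of_feasible hf (mem_filter.mp hj).1).1,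
      (mem_filter.mp hj).2⟩)
    (hf.2.1.mono (coe_subset.mpr hsub))
  rwa [Nat.card_Icc, show k + 1 + 1 - 2 = k by omega] at this

theorem le_sum_alpha_earlyJobs (H : KSumReduction n k α S β r d e h)
    (hf : IsFeasible (n + 1) (n + k + 4) r d e h (Icc 1 (n + 1)) σ) :
    (k - (earlyJobs n k σ).card) * S + β ≤ ∑ i ∈ earlyJobs n k σ, α i := by
  set I := earlyJobs n k σ
  have hI : I ⊆ Icc 1 n := filter_subset _ _
  have hlate : ∑ i ∈ Icc 1 n \ I, (S + α i) ≤ ∑ i ∈ Icc 1 n \ I, h (σ i) :=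
    sum_le_sum fun i hi => by
      obtain ⟨hi, hiI⟩ := mem_sdiff.mp hi
      exact H.add_alpha_le_harvest_slot hf hi (by simpa [I, earlyJobs, hi] using hiI)
  have hsplit := sum_sdiff (f := fun i => h (σ i)) hI
  have hearly : 0 ≤ ∑ i ∈ I, h (σ i) :=
    sum_nonneg fun i hi => H.harvest_slot_nonneg hf (hI hi)
  have hcomp := sum_sdiff (f := fun i => S + α i) hI
  rw [H.sum_add_alpha_Icc, sum_add_const_eq α I] at hcomp
  have := H.sum_harvest_slot_le hf
  linarith

theorem sum_energy_earlyJobs_le (H : KSumReduction n k α S β r d e h)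
    (hf : IsFeasible (n + 1) (n + k + 4) r d e h (Icc 1 (n + 1)) σ) :
    ∑ i ∈ earlyJobs n k σ, e i ≤ h 1 := by
  set I := earlyJobs n k σ
  have hI : I ⊆ Icc 1 n := filter_subset _ _
  have hIJ : I ⊆ Icc 1 (n + 1) := hI.trans (Icc_subset_Icc_right (Nat.le_succ n))
  rcases I.eq_empty_or_nonempty with hempty | hne
  · rw [hempty, sum_empty]
    exact H.harvest_nonneg le_rfl (by omega)
  -- the early job scheduled last must be paid for by `h 1` together with all other early jobs
  obtain ⟨i, hi, hmax⟩ := exists_max_image I σ hne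
  have hslot := H.slot_mem_of_feasible hf (hI hi)
  have hiearly := (mem_filter.mp hi).2
  have hcover := hf.add_sum_le_sum_harvest (hIJ hi) ((erase_subset _ _).trans hIJ)
    (fun j hj => lt_of_le_of_ne (hmax j (mem_of_mem_erase hj))
      fun heq => ne_of_mem_erase hj (hf.2.1 (hIJ (mem_of_mem_erase hj)) (hIJ hi) heq))
    (H.consumption_nonneg_before hf (by rw [H.slot_last_of_feasible hf]; omega))
  rw [H.sum_harvest_Icc_of_le (by omega) (by omega)] at hcover
  have hdrop : ∑ j ∈ I.erase i, e j ≤ ∑ j ∈ I.erase i, (e j + h (σ j)) :=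
    sum_le_sum fun j hj =>
      le_add_of_nonneg_right (H.harvest_slot_nonneg hf (hI (mem_of_mem_erase hj)))
  rw [← add_sum_erase I e hi]
  linarith

theorem exists_kSum_of_feasible (H : KSumReduction n k α S β r d e h)
    (hf : IsFeasible (n + 1) (n + k + 4) r d e h (Icc 1 (n + 1)) σ) :
    ∃ I : Finset ℕ, I ⊆ Icc 1 n ∧ I.card = k ∧ ∑ i ∈ I, α i = β := by
  have hI : earlyJobs n k σ ⊆ Icc 1 n := filter_subset _ _
  have hup := H.sum_energy_earlyJobs_le hf
  rw [H.sum_energy hI, H.harvest_one, ← mul_pow] at hup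
  obtain ⟨hcard, hsum⟩ := eq_and_eq_of_bounds (by exact_mod_cast H.card_earlyJobs_le hf)
    H.S_pos.le (H.sum_alpha_le hI) H.Sn_pos H.beta_pos (H.le_sum_alpha_earlyJobs hf) hup
  exact ⟨earlyJobs n k σ, hI, by exact_mod_cast hcard, hsum⟩

theorem harvest_kSumSchedule_of_mem (H : KSumReduction n k α S β r d e h) (hI : I ⊆ Icc 1 n)
    (hcard : I.card = k) (hi : i ∈ I) : h (kSumSchedule n k I i) = 0 :=
  H.harvest_idle _ (kSumSchedule_bounds_of_mem hI hcard hi).1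
    (kSumSchedule_bounds_of_mem hI hcard hi).2

theorem harvest_kSumSchedule_of_mem_sdiff (H : KSumReduction n k α S β r d e h)
    (hi : i ∈ Icc 1 n \ I) : h (kSumSchedule n k I i) = S + α i := by
  have hin := mem_Icc.mp (mem_sdiff.mp hi).1
  rw [kSumSchedule_of_mem_sdiff hi, H.harvest_item _ (by omega) (by omega),
    show k + 2 + i - k - 2 = i by omega]

theorem consumption_kSumSchedule_nonneg (H : KSumReduction n k α S β r d e h)
    (hI : I ⊆ Icc 1 n) (hcard : I.card = k) (hi : i ∈ Icc 1 n) :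
    0 ≤ e i + h (kSumSchedule n k I i) := by
  by_cases hiI : i ∈ I
  · rw [H.harvest_kSumSchedule_of_mem hI hcard hiI, add_zero]
    exact H.energy_nonneg hi
  · rw [H.harvest_kSumSchedule_of_mem_sdiff (mem_sdiff.mpr ⟨hi, hiI⟩)]
    linarith [H.energy_nonneg hi, H.alpha_pos i hi, H.S_pos]

theorem sum_energy_eq_harvest_one (H : KSumReduction n k α S β r d e h) (hI : I ⊆ Icc 1 n)
    (hcard : I.card = k) (hsum : ∑ i ∈ I, α i = β) : ∑ i ∈ I, e i = h 1 := by
  rw [H.sum_energy hI, hcard, hsum, H.harvest_one]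

theorem sum_energy_sdiff_eq_harvest_buffer (H : KSumReduction n k α S β r d e h)
    (hI : I ⊆ Icc 1 n) (hcard : I.card = k) (hsum : ∑ i ∈ I, α i = β) :
    ∑ i ∈ Icc 1 n \ I, e i = h (k + 2) := by
  have := sum_sdiff (f := e) hI
  rw [H.sum_energy_Icc, H.sum_energy_eq_harvest_one hI hcard hsum] at this
  linarith

theorem sum_consumption_kSumSchedule_eq_harvest_one (H : KSumReduction n k α S β r d e h)
    (hI : I ⊆ Icc 1 n) (hcard : I.card = k) (hsum : ∑ i ∈ I, α i = β) :
    ∑ j ∈ I, (e j + h (kSumSchedule n k I j)) = h 1 := by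
  rw [← H.sum_energy_eq_harvest_one hI hcard hsum]
  exact sum_congr rfl fun j hj => by rw [H.harvest_kSumSchedule_of_mem hI hcard hj, add_zero]

theorem energy_le_energyBefore_of_mem (H : KSumReduction n k α S β r d e h)
    (hI : I ⊆ Icc 1 n) (hcard : I.card = k) (hsum : ∑ i ∈ I, α i = β) (hi : i ∈ I) :
    e i ≤ energyBefore e h (Icc 1 (n + 1)) (kSumSchedule n k I) (kSumSchedule n k I i) := by
  have hslot := kSumSchedule_bounds_of_mem hI hcard hi
  have hbefore : (Icc 1 (n + 1)).filter (fun j => kSumSchedule n k I j < kSumSchedule n k I i)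
      ⊆ I.erase i := fun j hj => by
    obtain ⟨hj, hlt⟩ := mem_filter.mp hj
    rcases kSumSchedule_cases hI hcard hj with ⟨hjI, -⟩ | ⟨-, hσj⟩ | ⟨-, hσj⟩
    · exact mem_erase.mpr ⟨by rintro rfl; omega, hjI⟩
    all_goals omega
  have hlow := le_energyBefore_of_filter_subset (e := e) hbefore fun j hj =>
    H.consumption_kSumSchedule_nonneg hI hcard (hI (mem_of_mem_erase hj))
  rw [H.sum_harvest_Icc_of_le (by omega) (by omega),
    sum_congr rfl fun j hj => by
      rw [H.harvest_kSumSchedule_of_mem hI hcard (mem_of_mem_erase hj), add_zero],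
    ← H.sum_energy_eq_harvest_one hI hcard hsum, ← add_sum_erase I e hi] at hlow
  linarith

theorem energy_le_energyBefore_of_mem_sdiff (H : KSumReduction n k α S β r d e h)
    (hI : I ⊆ Icc 1 n) (hcard : I.card = k) (hsum : ∑ i ∈ I, α i = β)
    (hi : i ∈ Icc 1 n \ I) :
    e i ≤ energyBefore e h (Icc 1 (n + 1)) (kSumSchedule n k I) (kSumSchedule n k I i) := by
  set C := Icc 1 n \ I
  have hin := mem_Icc.mp (mem_sdiff.mp hi).1
  have hσi := kSumSchedule_of_mem_sdiff (k := k) hi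
  have hbefore : (Icc 1 (n + 1)).filter (fun j => kSumSchedule n k I j < kSumSchedule n k I i)
      ⊆ I ∪ C.filter (· < i) := fun j hj => by
    obtain ⟨hj, hlt⟩ := mem_filter.mp hj
    rcases kSumSchedule_cases hI hcard hj with ⟨hjI, -⟩ | ⟨hjC, hσj⟩ | ⟨-, hσj⟩
    · exact mem_union_left _ hjI
    · exact mem_union_right _ (mem_filter.mpr ⟨hjC, by omega⟩)
    · omega
  have hlow := le_energyBefore_of_filter_subset (e := e) hbefore fun j hj => by
    rcases mem_union.mp hj with hjI | hjC
    · exact H.consumption_kSumSchedule_nonneg hI hcard (hI hjI)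
    · exact H.consumption_kSumSchedule_nonneg hI hcard (sdiff_subset (filter_subset _ _ hjC))
  have hlate : ∑ j ∈ C.filter (· < i), (e j + h (kSumSchedule n k I j))
      = ∑ j ∈ C.filter (· < i), e j + ∑ j ∈ C.filter (· < i), (S + α j) := by
    rw [← sum_add_distrib]
    exact sum_congr rfl fun j hj => by
      rw [H.harvest_kSumSchedule_of_mem_sdiff (filter_subset _ _ hj)]
  rw [sum_union (disjoint_sdiff.mono_right (filter_subset _ _)),
    H.sum_consumption_kSumSchedule_eq_harvest_one hI hcard hsum, hlate, hσi,
    show k + 2 + i - 1 = k + 2 + (i - 1) by omega, H.sum_harvest_Icc_add (by omega)] at hlow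
  have hharvest : ∑ j ∈ C.filter (· < i), (S + α j) ≤ ∑ j ∈ Icc 1 (i - 1), (S + α j) :=
    H.sum_add_alpha_le_of_subset (by omega) fun j hj =>
      mem_Icc.mpr ⟨(mem_Icc.mp (mem_sdiff.mp (mem_filter.mp hj).1).1).1,
        by have := (mem_filter.mp hj).2; omega⟩
  have hbuffer : e i + ∑ j ∈ C.filter (· < i), e j ≤ h (k + 2) := by
    rw [← sum_insert (by simp), ← H.sum_energy_sdiff_eq_harvest_buffer hI hcard hsum]
    exact sum_le_sum_of_subset_of_nonneg (insert_subset hi (filter_subset _ _))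
      fun j hj _ => H.energy_nonneg (sdiff_subset hj)
  rw [hσi]
  linarith

theorem energy_le_energyBefore_last (H : KSumReduction n k α S β r d e h)
    (hI : I ⊆ Icc 1 n) (hcard : I.card = k) (hsum : ∑ i ∈ I, α i = β) :
    e (n + 1) ≤ energyBefore e h (Icc 1 (n + 1)) (kSumSchedule n k I) (n + k + 4) := by
  have hbefore : (Icc 1 (n + 1)).filter (fun j => kSumSchedule n k I j < n + k + 4)
      ⊆ Icc 1 n := fun j hj => by
    obtain ⟨hj, hlt⟩ := mem_filter.mp hj
    have : j ≠ n + 1 := by rintro rfl; rw [kSumSchedule_last] at hlt; omega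
    exact mem_Icc.mpr ⟨(mem_Icc.mp hj).1, by have := (mem_Icc.mp hj).2; omega⟩
  have hlow := le_energyBefore_of_filter_subset (e := e) hbefore fun j hj =>
    H.consumption_kSumSchedule_nonneg hI hcard hj
  have hslots := sum_sdiff (f := fun j => h (kSumSchedule n k I j)) hI
  rw [sum_congr rfl fun j hj => H.harvest_kSumSchedule_of_mem_sdiff hj,
    sum_congr rfl fun j hj => H.harvest_kSumSchedule_of_mem hI hcard hj, sum_const_zero,
    add_zero] at hslots
  have hitems := sum_sdiff (f := fun j => S + α j) hI
  rw [sum_add_const_eq α I, hcard, hsum] at hitems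
  rw [show n + k + 4 - 1 = k + 2 + n + 1 by omega, sum_Icc_succ_top (by omega),
    H.sum_harvest_Icc_add le_rfl, show k + 2 + n + 1 = n + k + 3 by omega, H.harvest_last,
    sum_add_distrib (f := e), H.sum_energy_Icc, ← hslots] at hlow
  rw [H.energy_last]
  linarith

theorem isFeasible_kSumSchedule (H : KSumReduction n k α S β r d e h) (hI : I ⊆ Icc 1 n)
    (hcard : I.card = k) (hsum : ∑ i ∈ I, α i = β) :
    IsFeasible (n + 1) (n + k + 4) r d e h (Icc 1 (n + 1)) (kSumSchedule n k I) := by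
  refine ⟨subset_rfl, injOn_kSumSchedule hI hcard, fun i hi => ?_⟩
  rw [H.release]
  rcases mem_or_mem_sdiff_or_eq_last I hi with hiI | hiC | rfl
  · have := kSumSchedule_bounds_of_mem hI hcard hiI
    have hin := mem_Icc.mp (hI hiI)
    rw [H.due i hin.1 hin.2]
    exact ⟨by omega, by omega, by omega, by omega,
      H.energy_le_energyBefore_of_mem hI hcard hsum hiI⟩
  · have := kSumSchedule_of_mem_sdiff (k := k) hiC
    have hin := mem_Icc.mp (mem_sdiff.mp hiC).1
    rw [H.due i hin.1 hin.2]
    exact ⟨by omega, by omega, by omega, by omega,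
      H.energy_le_energyBefore_of_mem_sdiff hI hcard hsum hiC⟩
  · rw [kSumSchedule_last, H.due_last]
    exact ⟨by omega, le_rfl, by omega, le_rfl, H.energy_le_energyBefore_last hI hcard hsum⟩

end KSumReduction

theorem ksum_reduction_arbitrary_due_general (n k : ℕ) (α : ℕ → ℤ) (S β : ℤ)
    (hn : 2 < n)
    (hα_pos : ∀ i ∈ Finset.Icc 1 n, 0 < α i)
    (hα_sorted : ∀ i j, 1 ≤ i → i ≤ j → j ≤ n → α j ≤ α i)
    (hS : S = ∑ i ∈ Finset.Icc 1 n, α i)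
    (hβ : 0 < β) (hβS : β < S)
    (hkn : k < n)
    (r : ℕ → ℕ) (hr : ∀ i, r i = 2)
    (d : ℕ → ℕ) (hd : ∀ i, 1 ≤ i → i ≤ n → d i = k + 2 + i)
    (hd' : d (n + 1) = n + k + 4)
    (e : ℕ → ℤ) (he : ∀ i, 1 ≤ i → i ≤ n → e i = S ^ 2 * n ^ 2 + α i * (S * n))
    (he' : e (n + 1) = S ^ 3 * n ^ 3)
    (h : ℕ → ℤ)
    (hh1 : h 1 = k * (S ^ 2 * n ^ 2) + β * (S * n))
    (hh2 : ∀ t, 2 ≤ t → t ≤ k + 1 → h t = 0)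
    (hh3 : h (k + 2) = (n - k) * (S ^ 2 * n ^ 2) + (S - β) * (S * n))
    (hh4 : ∀ t, k + 3 ≤ t → t ≤ n + k + 2 → h t = S + α (t - k - 2))
    (hh5 : h (n + k + 3) = S ^ 3 * n ^ 3 - S * k - β) :
    (∃ σ : ℕ → ℕ,
      IsFeasible (n + 1) (n + k + 4) r d e h (Finset.Icc 1 (n + 1)) σ) ↔
    ∃ I : Finset ℕ, I ⊆ Finset.Icc 1 n ∧ I.card = k ∧ ∑ i ∈ I, α i = β := by
  have H : KSumReduction n k α S β r d e h :=
    ⟨hn, hα_pos, hα_sorted, hS, hβ, hβS, hkn, hr, hd, hd', he, he', hh1, hh2, hh3, hh4, hh5⟩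
  exact ⟨fun ⟨σ, hσ⟩ => H.exists_kSum_of_feasible hσ,
    fun ⟨I, hI, hcard, hsum⟩ => ⟨kSumSchedule n k I, H.isFeasible_kSumSchedule hI hcard hsum⟩⟩

/-- Correctness of the reduction from k-SUM to EAS with
identical release times and arbitrary due dates: the constructed instance with
`n + 1` jobs and `T = n + k + 4` slots admits a feasible schedule of all `n + 1`
jobs iff some `k` of the `α i` sum to `β`. -/
theorem ksum_reduction_arbitrary_due (n k : ℕ) (α : ℕ → ℤ) (S β : ℤ)
    (hn : 2 < n)
    (hα_pos : ∀ i ∈ Finset.Icc 1 n, 0 < α i)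
    (hα_sorted : ∀ i j, 1 ≤ i → i ≤ j → j ≤ n → α j ≤ α i)
    (hS : S = ∑ i ∈ Finset.Icc 1 n, α i) (hS2 : 2 < S)
    (hβ : 0 < β) (hβS : β < S)
    (hk : 0 < k) (hkn : k < n)
    (r : ℕ → ℕ) (hr : ∀ i, r i = 2)
    (d : ℕ → ℕ) (hd : ∀ i, 1 ≤ i → i ≤ n → d i = k + 2 + i)
    (hd' : d (n + 1) = n + k + 4)
    (e : ℕ → ℤ) (he : ∀ i, 1 ≤ i → i ≤ n → e i = S ^ 2 * n ^ 2 + α i * (S * n))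
    (he' : e (n + 1) = S ^ 3 * n ^ 3)
    (h : ℕ → ℤ)
    (hh1 : h 1 = k * (S ^ 2 * n ^ 2) + β * (S * n))
    (hh2 : ∀ t, 2 ≤ t → t ≤ k + 1 → h t = 0)
    (hh3 : h (k + 2) = (n - k) * (S ^ 2 * n ^ 2) + (S - β) * (S * n))
    (hh4 : ∀ t, k + 3 ≤ t → t ≤ n + k + 2 → h t = S + α (t - k - 2))
    (hh5 : h (n + k + 3) = S ^ 3 * n ^ 3 - S * k - β)
    (hh6 : h (n + k + 4) = 0) :
    (∃ σ : ℕ → ℕ,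
      IsFeasible (n + 1) (n + k + 4) r d e h (Finset.Icc 1 (n + 1)) σ) ↔
    ∃ I : Finset ℕ, I ⊆ Finset.Icc 1 n ∧ I.card = k ∧ ∑ i ∈ I, α i = β :=
  ksum_reduction_arbitrary_due_general n k α S β hn hα_pos hα_sorted hS hβ hβS hkn r hr d hd hd' e
    he he' h hh1 hh2 hh3 hh4 hh5
end

section
/- Let α_1 ≥ α_2 ≥ … ≥ α_n be positive integers with n > 2, let S = Σ_{i=1}^n α_i with S > 2, let β be an integer with 0 < β < S, and let k < n be a positive integer. Consider the EAS instance with T = n + k + 4 time slots and n + 1 jobs, where for i ∈ {1,…,n}, job i has r_i = 2, d_i = k + 2 + i, and e_i = S²n² + α_i·(Sn), and job n+1 has r_{n+1} = 2, d_{n+1} = n + k + 4, and e_{n+1} = S³n³; and where h_1 = k·(S²n²) + β·(Sn); h_t = 0 for t ∈ {2,…,k+1}; h_{k+2} = (n−k)·(S²n²) + (S−β)·(Sn); h_t = S + α_{t−k−2} for t ∈ {k+3,…,n+k+2}; h_{n+k+3} = S³n³ − S·k − β; and h_{n+k+4} = 0. Then in every feasible schedule scheduling all n + 1 jobs, job n+1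 is scheduled at slot n + k + 4; in particular, job n+1 is not scheduled at any slot in {1,…,n+k+2}. -/
open Finset

theorem energyBefore_le_sum_harvest {e h : ℕ → ℤ} {J : Finset ℕ} {σ : ℕ → ℕ} {t m : ℕ}
    (htm : t ≤ m + 1) (hh : ∀ τ ∈ Icc 1 m, 0 ≤ h τ) (hσ : ∀ i ∈ J, 1 ≤ σ i)
    (he : ∀ i ∈ J, σ i < t → 0 ≤ e i) :
    energyBefore e h J σ t ≤ ∑ τ ∈ Icc 1 m, h τ := by
  have hspent : 0 ≤ ∑ i ∈ J.filter (fun i => σ i < t), (e i + h (σ i)) := by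
    refine sum_nonneg fun i hi => ?_
    obtain ⟨hiJ, hit⟩ := mem_filter.mp hi
    have := hh (σ i) (mem_Icc.mpr ⟨hσ i hiJ, by omega⟩)
    linarith [he i hiJ hit]
  have hharvest : ∑ τ ∈ Icc 1 (t - 1), h τ ≤ ∑ τ ∈ Icc 1 m, h τ :=
    sum_le_sum_of_subset_of_nonneg (Icc_subset_Icc_right (by omega)) fun τ hτ _ => hh τ hτ
  unfold energyBefore
  linarith

theorem sum_Ioc_add_right {M : Type*} [AddCommMonoid M] (f : ℕ → M) (a b c : ℕ) :
    ∑ τ ∈ Ioc (a + c) (b + c), f τ = ∑ j ∈ Ioc a b, f (j + c) := by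
  rw [← map_add_right_Ioc, sum_map]
  rfl

theorem add_lt_pow_three_mul_pow_three {S N : ℤ} (hS : 3 ≤ S) (hN : 3 ≤ N) :
    S ^ 2 * N ^ 3 + S ^ 2 * N + N * S + S < S ^ 3 * N ^ 3 := by
  have hS2N : 0 < S ^ 2 * N := by positivity
  have h1 : S ^ 2 * N ^ 3 * 3 ≤ S ^ 2 * N ^ 3 * S := by gcongr
  have h2 : S ^ 2 * N * 9 ≤ S ^ 2 * N * N ^ 2 := by gcongr; nlinarith
  have h3 : N * S * 1 ≤ N * S * S := by gcongr; linarith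
  have h4 : S * 1 ≤ S * (S * N) := by gcongr; nlinarith
  linear_combination h1 + 2 * h2 + h3 + h4 + 15 * hS2N

namespace KSumReduction

theorem harvest_nonneg_s13 {n k : ℕ} {α : ℕ → ℤ} {S β : ℤ} {h : ℕ → ℤ}
    (hα_pos : ∀ i ∈ Icc 1 n, 0 < α i) (hβ : 0 < β) (hβS : β < S) (hkn : k < n)
    (hh1 : h 1 = k * (S ^ 2 * n ^ 2) + β * (S * n))
    (hh2 : ∀ t, 2 ≤ t → t ≤ k + 1 → h t = 0)
    (hh3 : h (k + 2) = (n - k) * (S ^ 2 * n ^ 2) + (S - β) * (S * n))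
    (hh4 : ∀ t, k + 3 ≤ t → t ≤ n + k + 2 → h t = S + α (t - k - 2)) :
    ∀ τ ∈ Icc 1 (n + k + 2), 0 ≤ h τ := by
  intro τ hτ
  obtain ⟨hτ1, hτ2⟩ := mem_Icc.mp hτ
  have hS : 0 ≤ S := by linarith
  have hnk : (0 : ℤ) ≤ n - k := by omega
  rcases Nat.lt_or_ge τ 2 with hτ | hτ
  · obtain rfl : τ = 1 := by omega
    rw [hh1]
    positivity
  rcases Nat.lt_or_ge τ (k + 2) with hτ' | hτ'
  · exact (hh2 τ hτ (by omega)).ge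
  rcases hτ'.eq_or_lt with rfl | hτ'
  · rw [hh3]
    have : 0 ≤ S - β := by linarith
    positivity
  · rw [hh4 τ hτ' hτ2]
    linarith [hα_pos (τ - k - 2) (mem_Icc.mpr ⟨by omega, by omega⟩)]

theorem requirement_nonneg {n : ℕ} {α : ℕ → ℤ} {S : ℤ} {e : ℕ → ℤ}
    (hα_pos : ∀ i ∈ Icc 1 n, 0 < α i) (hS : 0 ≤ S)
    (he : ∀ i, 1 ≤ i → i ≤ n → e i = S ^ 2 * n ^ 2 + α i * (S * n))
    (he' : e (n + 1) = S ^ 3 * n ^ 3) :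
    ∀ i ∈ Icc 1 (n + 1), 0 ≤ e i := by
  intro i hi
  obtain ⟨hi1, hi2⟩ := mem_Icc.mp hi
  rcases hi2.eq_or_lt with rfl | hi2
  · rw [he']
    positivity
  · rw [he i hi1 (by omega)]
    have := (hα_pos i (mem_Icc.mpr ⟨hi1, by omega⟩)).le
    positivity

theorem sum_harvest {n k : ℕ} {α : ℕ → ℤ} {S β : ℤ} {h : ℕ → ℤ}
    (hS : S = ∑ i ∈ Icc 1 n, α i)
    (hh1 : h 1 = k * (S ^ 2 * n ^ 2) + β * (S * n))
    (hh2 : ∀ t, 2 ≤ t → t ≤ k + 1 → h t = 0)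
    (hh3 : h (k + 2) = (n - k) * (S ^ 2 * n ^ 2) + (S - β) * (S * n))
    (hh4 : ∀ t, k + 3 ≤ t → t ≤ n + k + 2 → h t = S + α (t - k - 2)) :
    ∑ τ ∈ Icc 1 (n + k + 2), h τ = S ^ 2 * n ^ 3 + S ^ 2 * n + n * S + S := by
  have hfirst : ∑ τ ∈ Ioc 0 (k + 1), h τ = h 1 := by
    rw [← sum_Ioc_consecutive h (Nat.zero_le 1) (by omega : 1 ≤ k + 1), Nat.Ioc_succ_singleton,
      sum_singleton, sum_eq_zero fun τ hτ => hh2 τ (by simp at hτ; omega) (mem_Ioc.mp hτ).2,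
      add_zero]
  have hlast : ∑ τ ∈ Ioc (k + 2) (n + k + 2), h τ = n * S + S := by
    have hshift := sum_Ioc_add_right h 0 n (k + 2)
    rw [zero_add, ← add_assoc, ← Icc_add_one_left_eq_Ioc 0 n, zero_add] at hshift
    have hslot : ∀ j ∈ Icc 1 n, h (j + (k + 2)) = S + α j := fun j hj => by
      rw [mem_Icc] at hj
      rw [hh4 _ (by omega) (by omega), show j + (k + 2) - k - 2 = j by omega]
    rw [hshift, sum_congr rfl hslot, sum_add_distrib, sum_const, Nat.card_Icc, ← hS]
    simp
  rw [show Icc 1 (n + k + 2) = Ioc 0 (n + k + 2) from Icc_add_one_left_eq_Ioc 0 _,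
    ← sum_Ioc_consecutive h (by omega : 0 ≤ k + 2) (by omega : k + 2 ≤ n + k + 2),
    sum_Ioc_succ_top (by omega), hfirst, hlast, hh1, hh3]
  ring

end KSumReduction

theorem ksum_reduction_last_job_slot_general (n k : ℕ) (α : ℕ → ℤ) (S β : ℤ)
    (hn : 2 < n)
    (hα_pos : ∀ i ∈ Finset.Icc 1 n, 0 < α i)
    (hS : S = ∑ i ∈ Finset.Icc 1 n, α i) (hS2 : 2 < S)
    (hβ : 0 < β) (hβS : β < S)
    (hkn : k < n)
    (r : ℕ → ℕ)
    (d : ℕ → ℕ)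
    (e : ℕ → ℤ) (he : ∀ i, 1 ≤ i → i ≤ n → e i = S ^ 2 * n ^ 2 + α i * (S * n))
    (he' : e (n + 1) = S ^ 3 * n ^ 3)
    (h : ℕ → ℤ)
    (hh1 : h 1 = k * (S ^ 2 * n ^ 2) + β * (S * n))
    (hh2 : ∀ t, 2 ≤ t → t ≤ k + 1 → h t = 0)
    (hh3 : h (k + 2) = (n - k) * (S ^ 2 * n ^ 2) + (S - β) * (S * n))
    (hh4 : ∀ t, k + 3 ≤ t → t ≤ n + k + 2 → h t = S + α (t - k - 2))
    (σ : ℕ → ℕ)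
    (hfeas : IsFeasible (n + 1) (n + k + 4) r d e h (Finset.Icc 1 (n + 1)) σ) :
    σ (n + 1) = n + k + 4 := by
  obtain ⟨-, -, hsched⟩ := hfeas
  obtain ⟨-, hT, -, -, henergy⟩ := hsched (n + 1) (by simp)
  by_contra hne
  have hreq := KSumReduction.requirement_nonneg hα_pos (by linarith) he he'
  have hbound := energyBefore_le_sum_harvest (by omega : σ (n + 1) ≤ n + k + 2 + 1)
    (KSumReduction.harvest_nonneg_s13 hα_pos hβ hβS hkn hh1 hh2 hh3 hh4) (fun i hi => (hsched i hi).1)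
    (fun i hi _ => hreq i hi)
  rw [KSumReduction.sum_harvest hS hh1 hh2 hh3 hh4] at hbound
  rw [he'] at henergy
  linarith [add_lt_pow_three_mul_pow_three (by linarith : (3 : ℤ) ≤ S) (by exact_mod_cast hn : (3 : ℤ) ≤ n)]

/-- In the instance of the reduction from k-SUM to EAS with
identical release times and arbitrary due dates, every feasible schedule of all
`n + 1` jobs schedules job `n + 1` at slot `n + k + 4` (in particular not at any
slot in `{1,…,n+k+2}`). -/
theorem ksum_reduction_last_job_slot (n k : ℕ) (α : ℕ → ℤ) (S β : ℤ)
    (hn : 2 < n)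
    (hα_pos : ∀ i ∈ Finset.Icc 1 n, 0 < α i)
    (hα_sorted : ∀ i j, 1 ≤ i → i ≤ j → j ≤ n → α j ≤ α i)
    (hS : S = ∑ i ∈ Finset.Icc 1 n, α i) (hS2 : 2 < S)
    (hβ : 0 < β) (hβS : β < S)
    (hk : 0 < k) (hkn : k < n)
    (r : ℕ → ℕ) (hr : ∀ i, r i = 2)
    (d : ℕ → ℕ) (hd : ∀ i, 1 ≤ i → i ≤ n → d i = k + 2 + i)
    (hd' : d (n + 1) = n + k + 4)
    (e : ℕ → ℤ) (he : ∀ i, 1 ≤ i → i ≤ n → e i = S ^ 2 * n ^ 2 + α i * (S * n))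
    (he' : e (n + 1) = S ^ 3 * n ^ 3)
    (h : ℕ → ℤ)
    (hh1 : h 1 = k * (S ^ 2 * n ^ 2) + β * (S * n))
    (hh2 : ∀ t, 2 ≤ t → t ≤ k + 1 → h t = 0)
    (hh3 : h (k + 2) = (n - k) * (S ^ 2 * n ^ 2) + (S - β) * (S * n))
    (hh4 : ∀ t, k + 3 ≤ t → t ≤ n + k + 2 → h t = S + α (t - k - 2))
    (hh5 : h (n + k + 3) = S ^ 3 * n ^ 3 - S * k - β)
    (hh6 : h (n + k + 4) = 0)
    (σ : ℕ → ℕ)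
    (hfeas : IsFeasible (n + 1) (n + k + 4) r d e h (Finset.Icc 1 (n + 1)) σ) :
    σ (n + 1) = n + k + 4 :=
  ksum_reduction_last_job_slot_general n k α S β hn hα_pos hS hS2 hβ hβS hkn r d e he he' h hh1 hh2
    hh3 hh4 σ hfeas
end

section
/- Let there be n items, where item i has nonnegative integer size b_i and nonnegative integer value v_i, together with a capacity B ≥ 0 and a value threshold V ≥ 0. Consider the WEAS instance with T = n + 1 time slots and n jobs, where job i has r_i = 2, d_i = n + 1, e_i = b_i, and w_i = v_i, and where h_1 = B and h_t = 0 for t ∈ {2,…,n+1}. Then there exists a feasible schedule S with Σ_{i ∈ J(S)} w_i ≥ V if and only if there exists a subset I ⊆ {1,…,n} with Σ_{i ∈ I} b_i ≤ B and Σ_{i ∈ I} v_i ≥ V. -/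
/-!
Since all energy is harvested at slot 1 and jobs run at slots `≥ 2`, the energy before a job is
`B` minus the sizes of the jobs scheduled earlier. So a schedule is feasible exactly when each job's
size plus those of its predecessors is at most `B`; for the last job this is the total size of the
schedule, and conversely any item set of total size at most `B` can be run in increasing order.
-/

section PrefixSums

variable {ι α M : Type*} [DecidableEq ι] [LinearOrder α] [AddCommMonoid M] [PartialOrder M]
  [CanonicallyOrderedAdd M] {J : Finset ι} {σ : ι → α} {e : ι → M}

theorem Finset.add_sum_filter_lt_le_sum {i : ι} (hi : i ∈ J) :
    e i + ∑ j ∈ J with σ j < σ i, e j ≤ ∑ j ∈ J, e j := by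
  rw [← Finset.sum_insert (by simp)]
  exact Finset.sum_le_sum_of_subset (Finset.insert_subset hi (Finset.filter_subset _ _))

theorem Finset.sum_le_of_forall_add_sum_filter_lt_le {B : M} (hσ : Set.InjOn σ J)
    (hB : ∀ i ∈ J, e i + ∑ j ∈ J with σ j < σ i, e j ≤ B) : ∑ j ∈ J, e j ≤ B := by
  rcases J.eq_empty_or_nonempty with rfl | hne
  · simp
  obtain ⟨i, hi, hmax⟩ := J.exists_max_image σ hne
  have hJ : insert i {j ∈ J | σ j < σ i} = J := by
    ext j
    simp only [Finset.mem_insert, Finset.mem_filter]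
    refine ⟨by rintro (rfl | ⟨hj, -⟩) <;> assumption, fun hj => ?_⟩
    rcases (hmax j hj).lt_or_eq with hlt | heq
    · exact .inr ⟨hj, hlt⟩
    · exact .inl (hσ hj hi heq)
  rw [← hJ, Finset.sum_insert (by simp)]
  exact hB i hi

end PrefixSums

theorem energyBefore_eq_sub_sum_of_harvest_eq_zero (e h : ℕ → ℤ) (J : Finset ℕ) (σ : ℕ → ℕ)
    (t : ℕ) (hσ : ∀ i ∈ J, h (σ i) = 0) :
    energyBefore e h J σ t = ∑ τ ∈ Finset.Icc 1 (t - 1), h τ - ∑ i ∈ J with σ i < t, e i := by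
  unfold energyBefore
  congr 1
  exact Finset.sum_congr rfl fun i hi => by rw [hσ i (Finset.mem_filter.1 hi).1, add_zero]

theorem sum_Icc_one_eq_of_eq_zero (h : ℕ → ℤ) {T m : ℕ} (hm : 1 ≤ m) (hmT : m ≤ T)
    (hh : ∀ t, 2 ≤ t → t ≤ T → h t = 0) : ∑ τ ∈ Finset.Icc 1 m, h τ = h 1 :=
  Finset.sum_eq_single_of_mem 1 (by simp [hm]) fun τ hτ hτ1 => by
    rw [Finset.mem_Icc] at hτ
    exact hh τ (by omega) (by omega)

theorem isFeasible_knapsack_iff (n : ℕ) (b : ℕ → ℕ) (B : ℕ) (h : ℕ → ℤ) (hh1 : h 1 = B)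
    (hh2 : ∀ t, 2 ≤ t → t ≤ n + 1 → h t = 0) (J : Finset ℕ) (σ : ℕ → ℕ) :
    IsFeasible n (n + 1) (fun _ => 2) (fun _ => n + 1) (fun i => (b i : ℤ)) h J σ ↔
      J ⊆ Finset.Icc 1 n ∧ Set.InjOn σ J ∧ (∀ i ∈ J, 2 ≤ σ i ∧ σ i ≤ n + 1) ∧
        ∀ i ∈ J, b i + ∑ j ∈ J with σ j < σ i, b j ≤ B := by
  have energy (hσ : ∀ i ∈ J, 2 ≤ σ i ∧ σ i ≤ n + 1) (i : ℕ) (hi : i ∈ J) :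
      (b i : ℤ) ≤ energyBefore (fun i => (b i : ℤ)) h J σ (σ i) ↔
        b i + ∑ j ∈ J with σ j < σ i, b j ≤ B := by
    have ⟨hσ₁, hσ₂⟩ := hσ i hi
    rw [energyBefore_eq_sub_sum_of_harvest_eq_zero _ _ _ _ _
        fun j hj => hh2 _ (hσ j hj).1 (hσ j hj).2,
      sum_Icc_one_eq_of_eq_zero h (T := n + 1) (by omega) (by omega) hh2, hh1, ← Nat.cast_sum]
    omega
  constructor
  · rintro ⟨hsub, hinj, hfeas⟩
    have hσ : ∀ i ∈ J, 2 ≤ σ i ∧ σ i ≤ n + 1 :=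
      fun i hi => ⟨(hfeas i hi).2.2.1, (hfeas i hi).2.1⟩
    exact ⟨hsub, hinj, hσ, fun i hi => (energy hσ i hi).1 (hfeas i hi).2.2.2.2⟩
  · rintro ⟨hsub, hinj, hσ, hB⟩
    refine ⟨hsub, hinj, fun i hi => ?_⟩
    have ⟨hσ₁, hσ₂⟩ := hσ i hi
    exact ⟨by omega, hσ₂, hσ₁, hσ₂, (energy hσ i hi).2 (hB i hi)⟩

/-- Correctness of the reduction from Knapsack to WEAS with
identical release times and due dates: in the instance with `T = n + 1` slots,
`r_i = 2`, `d_i = n + 1`, `e_i = b_i`, `w_i = v_i`, `h_1 = B` and `h_t = 0`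
otherwise, there is a feasible schedule of total weight at least `V` iff there
is a subset of items of total size at most `B` and total value at least `V`. -/
theorem knapsack_reduction (n : ℕ) (b v : ℕ → ℕ) (B V : ℕ)
    (h : ℕ → ℤ) (hh1 : h 1 = B) (hh2 : ∀ t, 2 ≤ t → t ≤ n + 1 → h t = 0) :
    (∃ (J : Finset ℕ) (σ : ℕ → ℕ),
      IsFeasible n (n + 1) (fun _ => 2) (fun _ => n + 1)
        (fun i => (b i : ℤ)) h J σ ∧ V ≤ ∑ i ∈ J, v i) ↔
    ∃ I : Finset ℕ, I ⊆ Finset.Icc 1 n ∧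
      (∑ i ∈ I, b i ≤ B ∧ V ≤ ∑ i ∈ I, v i) := by
  simp only [isFeasible_knapsack_iff n b B h hh1 hh2]
  constructor
  · rintro ⟨J, σ, ⟨hJ, hσ, -, hB⟩, hV⟩
    exact ⟨J, hJ, J.sum_le_of_forall_add_sum_filter_lt_le hσ hB, hV⟩
  · rintro ⟨I, hI, hB, hV⟩
    refine ⟨I, (· + 1), ⟨hI, fun i _ j _ hij => Nat.succ_injective hij, fun i hi => ?_,
      fun i hi => (I.add_sum_filter_lt_le_sum hi).trans hB⟩, hV⟩
    have := Finset.mem_Icc.1 (hI hi)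
    exact ⟨show 2 ≤ i + 1 by omega, show i + 1 ≤ n + 1 by omega⟩
end
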